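/- Let π : M → U(H) be a unitary representation, θ : Ξ → Lie(M) linear, and define π^⋉(m₁,m₂)T = π(m₁m₂)Tπ(m₁)⁻¹ on Hilbert–Schmidt operators. Suppose exp_{M⋉M}(X,Y) = (exp_M X, exp_M(−X)exp_M(X+Y)) for the group square. Then for all φ₁,φ₂,f₁,f₂ ∈ H and X,Y ∈ Ξ: A^{π^⋉,θ×θ}_{φ₁⊗φ̄₂}(f₁⊗f̄₂)(X,Y) = A^{π,θ}_{φ₁}f₁(X+Y) · conj(A^{π,θ}_{φ₂}f₂(X)). -/

import Mathlib

/-- Rank-one operator `f ⊗ φ̄ : h ↦ ⟨h, φ⟩ f`. -/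
noncomputable def rankOneOp {H : Type*} [NormedAddCommGroup H] [InnerProductSpace ℂ H]
    (f φ : H) : H → H := fun h => (inner ℂ φ h : ℂ) • f

/-- Hilbert–Schmidt inner product `⟨S, T⟩_HS = ∑ᵢ ⟪S eᵢ, T eᵢ⟫`. -/
noncomputable def hsInner {H : Type*} [NormedAddCommGroup H] [InnerProductSpace ℂ H]
    [CompleteSpace H] {ι : Type*} (b : HilbertBasis ι ℂ H) (S T : H → H) : ℂ :=
  ∑' i, (inner ℂ (S (b i)) (T (b i)) : ℂ)

/-- The action `π^⋉(m₁,m₂) T = π(m₁m₂) ∘ T ∘ π(m₁)⁻¹` on operators. -/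
def piLtimes {M : Type*} [Group M] {H : Type*} [NormedAddCommGroup H]
    [InnerProductSpace ℂ H] (π : M →* (H ≃ₗᵢ[ℂ] H)) (m : M × M) (T : H → H) : H → H :=
  fun h => π (m.1 * m.2) (T ((π m.1).symm h))

/-- The ambiguity function `A_φ f (X) = ⟨f, π(e(X))φ)⟩`. -/
noncomputable def ambiguity {M H : Type*} [Group M] [NormedAddCommGroup H]
    [InnerProductSpace ℂ H] {d : ℕ} (π : M →* (H ≃ₗᵢ[ℂ] H))
    (e : (Fin d → ℝ) → M) (φ f : H) : (Fin d → ℝ) → ℂ :=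
  fun X => (inner ℂ (π (e X) φ) f : ℂ)

/-! Conjugating by unitaries moves a rank-one operator `f ⊗ φ̄` to `π(m₁m₂)f ⊗ (π(m₁)φ)‾`, and
by Parseval the Hilbert–Schmidt pairing of `g ⊗ ψ̄` with `f ⊗ φ̄` is `⟨g, f⟩⟨φ, ψ⟩`. With
`m₁m₂ = e(X + Y)` and `m₁ = e(X)` these two factors are the two ambiguity functions. -/

section RankOne

variable {H : Type*} [NormedAddCommGroup H] [InnerProductSpace ℂ H]

theorem rankOneOp_conj_linearIsometryEquiv (U V : H ≃ₗᵢ[ℂ] H) (f φ : H) :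
    (fun h => V (rankOneOp f φ (U.symm h))) = rankOneOp (V f) (U φ) := by
  funext h
  have adjoint : inner ℂ φ (U.symm h) = inner ℂ (U φ) h := by
    rw [← U.inner_map_map, U.apply_symm_apply]
  simp only [rankOneOp, map_smul, adjoint]

theorem piLtimes_rankOneOp {M : Type*} [Group M] (π : M →* (H ≃ₗᵢ[ℂ] H)) (m : M × M)
    (f φ : H) :
    piLtimes π m (rankOneOp f φ) = rankOneOp (π (m.1 * m.2) f) (π m.1 φ) :=
  rankOneOp_conj_linearIsometryEquiv (π m.1) (π (m.1 * m.2)) f φ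

theorem hsInner_rankOneOp_rankOneOp [CompleteSpace H] {ι : Type*} (b : HilbertBasis ι ℂ H)
    (g ψ f φ : H) :
    hsInner b (rankOneOp g ψ) (rankOneOp f φ) = inner ℂ g f * inner ℂ φ ψ := by
  have term : ∀ i, inner ℂ (rankOneOp g ψ (b i)) (rankOneOp f φ (b i))
      = inner ℂ g f * (inner ℂ φ (b i) * inner ℂ (b i) ψ) := by
    intro i
    simp only [rankOneOp, inner_smul_left, inner_smul_right, inner_conj_symm]
    ring
  rw [hsInner, tsum_congr term, tsum_mul_left, b.tsum_inner_mul_inner]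

end RankOne

/-- Ambiguity function of `π^⋉` along `θ × θ` on rank-one operators. With
`exp_{M⋉M}(X,Y) = (exp_M X, exp_M(−X) exp_M(X+Y))`, i.e. the group-square element
`(e(X), e(X)⁻¹ e(X+Y))`:
`A^{π^⋉,θ×θ}_{φ₁⊗φ̄₂}(f₁⊗f̄₂)(X,Y) = A^{π,θ}_{φ₁}f₁(X+Y) · conj (A^{π,θ}_{φ₂}f₂(X))`. -/
theorem ambiguity_piLtimes_rankOne {M H : Type*} [Group M] [NormedAddCommGroup H]
    [InnerProductSpace ℂ H] [CompleteSpace H] {ι : Type*} (b : HilbertBasis ι ℂ H)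
    {d : ℕ} (π : M →* (H ≃ₗᵢ[ℂ] H)) (e : (Fin d → ℝ) → M) :
    ∀ (φ₁ φ₂ f₁ f₂ : H) (X Y : Fin d → ℝ),
      hsInner b
          (piLtimes π (e X, (e X)⁻¹ * e (X + Y)) (rankOneOp φ₁ φ₂))
          (rankOneOp f₁ f₂)
        = ambiguity π e φ₁ f₁ (X + Y) * (starRingEnd ℂ) (ambiguity π e φ₂ f₂ X) := by
  intro φ₁ φ₂ f₁ f₂ X Y
  rw [piLtimes_rankOneOp, mul_inv_cancel_left, hsInner_rankOneOp_rankOneOp, ambiguity,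
    ambiguity, inner_conj_symm]
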